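/- arXiv:2501.12588 — 2 statements merged into one kernel-verified Lean document; each statement's English description precedes it below -/
import Mathlib

section
/- On (0,∞), the function −1/(ν·log₂(1 − e^{−ν})) attains its minimum at ν = ln 2, where its value is −1/(ln2·log₂(1/2)) = 1/ln 2; equivalently, |ν·log₂(1 − e^{−ν})| is maximized at ν = ln 2. -/
open Real Set

-- ψ(x) = -x log x + (1-x) log (1-x) is concave on [0,1/2]
noncomputable def psi : ℝ → ℝ := fun x => Real.negMulLog x - Real.negMulLog (1 - x)

lemma psi_hasDeriv {x : ℝ} (hx : x ∈ Ioo (0:ℝ) (1/2)) :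
    HasDerivAt psi (-Real.log x - Real.log (1 - x) - 2) x := by
  have h1 : (0:ℝ) < x := hx.1
  have h2 : (0:ℝ) < 1 - x := by linarith [hx.2]
  have d1 : HasDerivAt Real.negMulLog (-Real.log x - 1) x :=
    Real.hasDerivAt_negMulLog h1.ne'
  have d2 : HasDerivAt (fun y : ℝ => Real.negMulLog (1 - y))
      ((-Real.log (1 - x) - 1) * (-1)) x := by
    have inner : HasDerivAt (fun y : ℝ => 1 - y) (-1) x := by
      simpa using (hasDerivAt_id x).const_sub 1
    exact (Real.hasDerivAt_negMulLog h2.ne').comp x inner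
  have := d1.sub d2
  exact this.congr_deriv (by ring)

lemma psi_nonneg {x : ℝ} (hx : x ∈ Icc (0:ℝ) (1/2)) : 0 ≤ psi x := by
  have hconc : ConcaveOn ℝ (Icc (0:ℝ) (1/2)) psi := by
    have hint : interior (Icc (0:ℝ) (1/2)) = Ioo (0:ℝ) (1/2) := interior_Icc
    have hcont : ContinuousOn psi (Icc (0:ℝ) (1/2)) := by
      apply Continuous.continuousOn
      exact Real.continuous_negMulLog.sub (Real.continuous_negMulLog.comp
        (continuous_const.sub continuous_id))
    have hderiv_eq : ∀ x ∈ Ioo (0:ℝ) (1/2),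
        deriv psi x = -Real.log x - Real.log (1 - x) - 2 := fun x hx =>
      (psi_hasDeriv hx).deriv
    refine concaveOn_of_deriv2_nonpos (convex_Icc _ _) hcont ?_ ?_ ?_
    · rw [hint]
      exact fun x hx => (psi_hasDeriv hx).differentiableAt.differentiableWithinAt
    · rw [hint]
      have : DifferentiableOn ℝ (fun x => -Real.log x - Real.log (1 - x) - 2)
          (Ioo (0:ℝ) (1/2)) := by
        intro x hx
        have h1 : (0:ℝ) < x := hx.1
        have h2 : (0:ℝ) < 1 - x := by linarith [hx.2]
        have : DifferentiableAt ℝ (fun x : ℝ => -Real.log x - Real.log (1 - x) - 2) x := by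
          apply DifferentiableAt.sub_const
          apply DifferentiableAt.sub
          · exact (Real.differentiableAt_log h1.ne').neg
          · exact (Real.differentiableAt_log h2.ne').comp x
              ((differentiableAt_const (1:ℝ)).sub differentiableAt_id)
        exact this.differentiableWithinAt
      exact this.congr hderiv_eq
    · rw [hint]
      intro x hx
      have h1 : (0:ℝ) < x := hx.1
      have h2 : (0:ℝ) < 1 - x := by linarith [hx.2]
      have heq : deriv (deriv psi) x
          = deriv (fun x => -Real.log x - Real.log (1 - x) - 2) x := by
        apply Filter.EventuallyEq.deriv_eq
        have : Ioo (0:ℝ) (1/2) ∈ nhds x := (isOpen_Ioo).mem_nhds hx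
        filter_upwards [this] with y hy
        exact (psi_hasDeriv hy).deriv
      have hd : HasDerivAt (fun x => -Real.log x - Real.log (1 - x) - 2)
          (-x⁻¹ - (-(1 - x)⁻¹)) x := by
        have da : HasDerivAt (fun x : ℝ => -Real.log x) (-x⁻¹) x :=
          (Real.hasDerivAt_log h1.ne').neg
        have db : HasDerivAt (fun x : ℝ => Real.log (1 - x)) ((1-x)⁻¹ * (-1)) x := by
          have inner : HasDerivAt (fun y : ℝ => 1 - y) (-1) x := by
            simpa using (hasDerivAt_id x).const_sub 1
          exact (Real.hasDerivAt_log h2.ne').comp x inner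
        have := (da.sub db).sub_const 2
        exact this.congr_deriv (by ring)
      show deriv^[2] psi x ≤ 0
      rw [Function.iterate_succ, Function.iterate_one, Function.comp_apply, heq, hd.deriv]
      have : (1 - x)⁻¹ ≤ x⁻¹ := by
        apply inv_anti₀ h1
        linarith [hx.2]
      linarith
  -- endpoints
  have h0 : psi 0 = 0 := by simp [psi]
  have h12 : psi (1/2) = 0 := by norm_num [psi]
  obtain ⟨hx0, hx2⟩ := hx
  have key := hconc.2 (left_mem_Icc.2 (by norm_num : (0:ℝ) ≤ 1/2))
    (right_mem_Icc.2 (by norm_num : (0:ℝ) ≤ 1/2))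
    (show (0:ℝ) ≤ 1 - 2*x by linarith) (show (0:ℝ) ≤ 2*x by linarith) (by ring)
  rw [h0, h12] at key
  have hxeq : (1 - 2*x) • (0:ℝ) + (2*x) • (1/2:ℝ) = x := by
    simp [smul_eq_mul]; ring
  rw [hxeq] at key
  simpa using key

lemma P_mono : MonotoneOn (fun x => Real.log x * Real.log (1 - x)) (Ioc (0:ℝ) (1/2)) := by
  have hint : interior (Ioc (0:ℝ) (1/2)) = Ioo (0:ℝ) (1/2) := interior_Ioc
  apply monotoneOn_of_deriv_nonneg (convex_Ioc _ _)
  · intro x hx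
    have h1 : (0:ℝ) < x := hx.1
    have h2 : (0:ℝ) < 1 - x := by linarith [hx.2]
    exact (((Real.continuousAt_log h1.ne').continuousWithinAt).mul
      (((Real.continuousAt_log h2.ne').comp
        ((continuous_const.sub continuous_id).continuousAt)).continuousWithinAt))
  · rw [hint]
    intro x hx
    have h1 : (0:ℝ) < x := hx.1
    have h2 : (0:ℝ) < 1 - x := by linarith [hx.2]
    exact ((Real.differentiableAt_log h1.ne').mul
      ((Real.differentiableAt_log h2.ne').comp x
        ((differentiableAt_const (1:ℝ)).sub differentiableAt_id))).differentiableWithinAt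
  · rw [hint]
    intro x hx
    have h1 : (0:ℝ) < x := hx.1
    have h2 : (0:ℝ) < 1 - x := by linarith [hx.2]
    have dlog2 : HasDerivAt (fun y : ℝ => Real.log (1 - y)) ((1-x)⁻¹ * (-1)) x := by
      have inner : HasDerivAt (fun y : ℝ => 1 - y) (-1) x := by
        simpa using (hasDerivAt_id x).const_sub 1
      exact (Real.hasDerivAt_log h2.ne').comp x inner
    have hd : HasDerivAt (fun x => Real.log x * Real.log (1 - x))
        (x⁻¹ * Real.log (1 - x) + Real.log x * ((1-x)⁻¹ * (-1))) x :=
      (Real.hasDerivAt_log h1.ne').mul dlog2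
    rw [hd.deriv]
    -- need: 0 ≤ log(1-x)/x - log x/(1-x), i.e. x log x ≤ (1-x) log (1-x)
    have hpsi : 0 ≤ psi x := psi_nonneg ⟨le_of_lt h1, le_of_lt hx.2⟩
    have hA : x * Real.log x ≤ (1 - x) * Real.log (1 - x) := by
      simp only [psi, Real.negMulLog] at hpsi
      nlinarith
    have heq : x⁻¹ * Real.log (1 - x) + Real.log x * ((1-x)⁻¹ * (-1))
        = ((1 - x) * Real.log (1 - x) - x * Real.log x) / (x * (1 - x)) := by
      field_simp
      ring
    rw [heq]
    exact div_nonneg (by linarith) (le_of_lt (mul_pos h1 h2))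

lemma key_ineq {x : ℝ} (hx : x ∈ Ioo (0:ℝ) 1) :
    Real.log x * Real.log (1 - x) ≤ (Real.log 2)^2 := by
  have hP12 : Real.log ((1:ℝ)/2) * Real.log (1 - 1/2) = (Real.log 2)^2 := by
    have he : (1:ℝ) - 1/2 = 1/2 := by norm_num
    rw [he, one_div, Real.log_inv]
    ring
  rcases le_or_gt x (1/2) with h | h
  · have hle := P_mono ⟨hx.1, h⟩ (⟨by norm_num, le_refl _⟩ : (1/2:ℝ) ∈ Ioc (0:ℝ) (1/2)) h
    simp only at hle
    exact hle.trans_eq hP12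
  · have h1x : (1 - x) ∈ Ioc (0:ℝ) (1/2) := ⟨by linarith [hx.2], by linarith⟩
    have hle := P_mono h1x (⟨by norm_num, le_refl _⟩ : (1/2:ℝ) ∈ Ioc (0:ℝ) (1/2)) h1x.2
    simp only [sub_sub_cancel] at hle
    rw [mul_comm]
    exact hle.trans_eq hP12

/-- F(ν) = −1/(ν·log₂(1−e^{−ν})) attains its minimum value 1/ln 2 at ν = ln 2. -/
theorem F_min_at_ln_two :
    let F : ℝ → ℝ := fun ν => -1 / (ν * Real.logb 2 (1 - Real.exp (-ν)))
    F (Real.log 2) = 1 / Real.log 2 ∧ ∀ ν > 0, F (Real.log 2) ≤ F ν := by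
  intro F
  have hl2 : (0:ℝ) < Real.log 2 := Real.log_pos (by norm_num)
  have hfirst : F (Real.log 2) = 1 / Real.log 2 := by
    show -1 / (Real.log 2 * Real.logb 2 (1 - Real.exp (-Real.log 2))) = 1 / Real.log 2
    have h1 : Real.exp (-Real.log 2) = 1/2 := by
      rw [Real.exp_neg, Real.exp_log (by norm_num : (0:ℝ) < 2)]
      norm_num
    rw [h1, show (1:ℝ) - 1/2 = 1/2 by norm_num]
    have h2 : Real.logb 2 ((1:ℝ)/2) = -1 := by
      rw [one_div, Real.logb_inv, Real.logb_self_eq_one] <;> norm_num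
    rw [h2]
    field_simp
  refine ⟨hfirst, ?_⟩
  intro ν hν
  rw [hfirst]
  show 1 / Real.log 2 ≤ -1 / (ν * Real.logb 2 (1 - Real.exp (-ν)))
  have hy0 : (0:ℝ) < 1 - Real.exp (-ν) := by
    have := Real.exp_lt_one_iff.2 (show -ν < 0 by linarith)
    linarith
  have hy1 : 1 - Real.exp (-ν) < 1 := by
    have := Real.exp_pos (-ν)
    linarith
  have hlogy : Real.log (1 - Real.exp (-ν)) < 0 := Real.log_neg hy0 hy1
  have hkey : ν * (-Real.log (1 - Real.exp (-ν))) ≤ Real.log 2 * Real.log 2 := by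
    have h := key_ineq (x := Real.exp (-ν)) ⟨Real.exp_pos _, Real.exp_lt_one_iff.2 (by linarith)⟩
    rw [Real.log_exp] at h
    nlinarith [h]
  have hpos : 0 < ν * (-Real.log (1 - Real.exp (-ν))) := mul_pos hν (by linarith)
  have hFν : -1 / (ν * Real.logb 2 (1 - Real.exp (-ν)))
      = Real.log 2 / (ν * (-Real.log (1 - Real.exp (-ν)))) := by
    rw [Real.logb]
    rw [div_eq_div_iff]
    · field_simp
    · have : ν * (Real.log (1 - Real.exp (-ν)) / Real.log 2) < 0 := by
        apply mul_neg_of_pos_of_neg hν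
        exact div_neg_of_neg_of_pos hlogy hl2
      exact ne_of_lt this
    · exact ne_of_gt hpos
  rw [hFν, div_le_div_iff₀ hl2 hpos, one_mul]
  exact hkey
end

section
/- For every ν > 0, ν·ln(1 − e^{−ν}) ≥ −(ln 2)², with equality if and only if ν = ln 2. -/
/-!
Substituting `x = e^{-ν}` turns the claim into `log x * log (1 - x) ≤ (log 2)²` on `(0, 1)`,
with equality only at `x = 1/2`. The left side is invariant under `x ↦ 1 - x`, and its
derivative `log (1 - x) / x - log x / (1 - x)` is the difference of the secant slopes of the
concave function `log` from `1` to `x` and from `1` to `1 - x`; it is therefore positive for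
`x < 1/2`, so the maximum is attained exactly at `x = 1/2`.
-/

open Real Set

theorem strictAntiOn_log_div_sub_one :
    StrictAntiOn (fun s : ℝ => log s / (s - 1)) (Ioi 0 \ {1}) := by
  rintro s ⟨hs, hs1⟩ t ⟨ht, ht1⟩ hst
  simpa using strictConcaveOn_log_Ioi.secant_strict_mono (mem_Ioi.2 one_pos) hs ht hs1 ht1 hst

theorem log_div_one_sub_lt_log_one_sub_div {x : ℝ} (hx0 : 0 < x) (hx : x < 1 / 2) :
    log x / (1 - x) < log (1 - x) / x := by
  have hslope : log (1 - x) / (1 - x - 1) < log x / (x - 1) :=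
    strictAntiOn_log_div_sub_one ⟨mem_Ioi.2 hx0, by simp; linarith⟩
      ⟨mem_Ioi.2 (by linarith : (0 : ℝ) < 1 - x), by simp; linarith⟩ (by linarith : x < 1 - x)
  rwa [sub_sub_cancel_left, div_neg, ← neg_sub 1 x, div_neg, neg_lt_neg_iff] at hslope

theorem hasDerivAt_log_mul_log_one_sub {x : ℝ} (hx0 : x ≠ 0) (hx1 : x ≠ 1) :
    HasDerivAt (fun y => log y * log (1 - y)) (log (1 - x) / x - log x / (1 - x)) x := by
  have h1x : 1 - x ≠ 0 := sub_ne_zero.2 hx1.symm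
  refine ((hasDerivAt_log hx0).mul (((hasDerivAt_id' x).const_sub 1).log h1x)).congr_deriv ?_
  field_simp
  ring

theorem strictMonoOn_log_mul_log_one_sub :
    StrictMonoOn (fun x => log x * log (1 - x)) (Ioc 0 (1 / 2)) := by
  have hderiv : ∀ x ∈ Ioc (0 : ℝ) (1 / 2), HasDerivAt (fun y => log y * log (1 - y))
      (log (1 - x) / x - log x / (1 - x)) x := fun x hx =>
    hasDerivAt_log_mul_log_one_sub hx.1.ne' (by linarith [hx.2])
  refine strictMonoOn_of_deriv_pos (convex_Ioc 0 (1 / 2))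
    (fun x hx => (hderiv x hx).continuousAt.continuousWithinAt) fun x hx => ?_
  rw [interior_Ioc] at hx
  rw [(hderiv x (Ioo_subset_Ioc_self hx)).deriv, sub_pos]
  exact log_div_one_sub_lt_log_one_sub_div hx.1 hx.2

theorem log_half_mul_log_one_sub_half : log (1 / 2 : ℝ) * log (1 - 1 / 2) = log 2 ^ 2 := by
  rw [show (1 : ℝ) - 1 / 2 = 1 / 2 by norm_num, one_div, log_inv]
  ring

theorem log_mul_log_one_sub_lt {x : ℝ} (hx0 : 0 < x) (hx1 : x < 1) (hx : x ≠ 1 / 2) :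
    log x * log (1 - x) < log 2 ^ 2 := by
  wlog hlt : x < 1 / 2 generalizing x
  · have hgt : 1 / 2 < x := lt_of_le_of_ne (not_lt.1 hlt) hx.symm
    simpa [mul_comm] using this (x := 1 - x) (by linarith) (by linarith) (by linarith) (by linarith)
  rw [← log_half_mul_log_one_sub_half]
  exact strictMonoOn_log_mul_log_one_sub ⟨hx0, hlt.le⟩ ⟨by norm_num, le_rfl⟩ hlt

/-- For ν > 0, ν·ln(1−e^{−ν}) ≥ −(ln 2)², with equality iff ν = ln 2. -/
theorem nu_log_min (ν : ℝ) (hν : 0 < ν) :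
    ν * Real.log (1 - Real.exp (-ν)) ≥ -(Real.log 2) ^ 2 ∧
      (ν * Real.log (1 - Real.exp (-ν)) = -(Real.log 2) ^ 2 ↔ ν = Real.log 2) := by
  set x := exp (-ν) with hx
  have hx1 : x < 1 := exp_lt_one_iff.2 (neg_lt_zero.2 hν)
  have hx_half : x = 1 / 2 ↔ ν = log 2 := by
    rw [hx, ← exp_log (by norm_num : (0 : ℝ) < 1 / 2), exp_eq_exp, one_div, log_inv, neg_inj]
  have hlog : ν * log (1 - x) = -(log x * log (1 - x)) := by rw [hx, log_exp]; ring
  rw [hlog]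
  by_cases hhalf : x = 1 / 2
  · rw [hhalf, log_half_mul_log_one_sub_half]
    simpa using hx_half.1 hhalf
  · have hlt := log_mul_log_one_sub_lt (exp_pos _) hx1 hhalf
    exact ⟨by linarith, iff_of_false (by linarith) (mt hx_half.2 hhalf)⟩
end
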